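/- arXiv:1703.03262 — 3 statements merged into one kernel-verified Lean document; each statement's English description precedes it below -/
import Mathlib

section
/- Every finite two-player game G = ({u0,u1},{A0,A1}) admits at least one mixed strategy profile that is envy-proof. -/
open Finset

variable {α β : Type*}

/-- Expected utility of `u` under the product of mixed strategies `p` and `q`. -/
def EU [Fintype α] [Fintype β] (u : α → β → ℝ) (p : α → ℝ) (q : β → ℝ) : ℝ :=
  ∑ a, ∑ b, p a * q b * u a b

/-- `p` is a probability distribution (mixed strategy). -/
def IsMixed [Fintype α] (p : α → ℝ) : Prop :=
  (∀ a, 0 ≤ p a) ∧ ∑ a, p a = 1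

/-- The pure action `a` viewed as a mixed strategy. -/
def pureStrat [DecidableEq α] (a : α) : α → ℝ :=
  fun a' => if a' = a then 1 else 0

/-- `(p,q)` is a Nash equilibrium of the two-player game `({u0,u1},{α,β})`. -/
def IsNash [Fintype α] [Fintype β] [DecidableEq α] [DecidableEq β]
    (u0 u1 : α → β → ℝ) (p : α → ℝ) (q : β → ℝ) : Prop :=
  (∀ a' : α, EU u0 (pureStrat a') q ≤ EU u0 p q) ∧
  (∀ b' : β, EU u1 p (pureStrat b') ≤ EU u1 p q)

/-- `(p,q)` is immune in the two-player game `({u0,u1},{α,β})`. -/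
def IsImmune [Fintype α] [Fintype β] [DecidableEq α] [DecidableEq β]
    (u0 u1 : α → β → ℝ) (p : α → ℝ) (q : β → ℝ) : Prop :=
  (∀ a' : α, EU u1 (pureStrat a') q ≥ EU u1 p q) ∧
  (∀ b' : β, EU u0 p (pureStrat b') ≥ EU u0 p q)

/-- `(p,q)` is envy-proof in the two-player game `({u0,u1},{α,β})`. -/
def IsEnvyProof [Fintype α] [Fintype β] [DecidableEq α] [DecidableEq β]
    (u0 u1 : α → β → ℝ) (p : α → ℝ) (q : β → ℝ) : Prop :=
  (∀ a' : α, EU u0 (pureStrat a') q - EU u0 p q ≤ EU u1 (pureStrat a') q - EU u1 p q) ∧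
  (∀ b' : β, EU u1 p (pureStrat b') - EU u1 p q ≤ EU u0 p (pureStrat b') - EU u0 p q)

/-! An envy-proof profile is exactly a saddle point of the zero-sum game with payoff `u0 - u1`
to player 0, since both envy-proofness inequalities compare `u0 - u1` before and after a
unilateral deviation. Such a saddle point exists by von Neumann's minimax theorem, a special case
of Sion's: expected utility is bilinear and the strategy simplices are compact and convex. -/

section MixedExtension

variable [Fintype α] [Fintype β]

lemma isLinearMap_EU_left (u : α → β → ℝ) (q : β → ℝ) :
    IsLinearMap ℝ fun p => EU u p q where
  map_add p p' := by simp only [EU, Pi.add_apply, add_mul, sum_add_distrib]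
  map_smul c p := by simp only [EU, Pi.smul_apply, smul_eq_mul, mul_sum, mul_assoc]

lemma isLinearMap_EU_right (u : α → β → ℝ) (p : α → ℝ) :
    IsLinearMap ℝ fun q => EU u p q where
  map_add q q' := by simp only [EU, Pi.add_apply, mul_add, add_mul, sum_add_distrib]
  map_smul c q := by
    simp only [EU, Pi.smul_apply, smul_eq_mul, mul_sum]
    exact sum_congr rfl fun a _ => sum_congr rfl fun b _ => by ring

lemma EU_sub (u u' : α → β → ℝ) (p : α → ℝ) (q : β → ℝ) :
    EU (u - u') p q = EU u p q - EU u' p q := by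
  simp only [EU, Pi.sub_apply, mul_sub, sum_sub_distrib]

theorem exists_EU_saddlePoint [Nonempty α] [Nonempty β] (u : α → β → ℝ) :
    ∃ p ∈ stdSimplex ℝ α, ∃ q ∈ stdSimplex ℝ β,
      ∀ p' ∈ stdSimplex ℝ α, ∀ q' ∈ stdSimplex ℝ β, EU u p' q ≤ EU u p q' := by
  let L (q : β → ℝ) := IsLinearMap.mk' _ (isLinearMap_EU_left u q)
  let R (p : α → ℝ) := IsLinearMap.mk' _ (isLinearMap_EU_right u p)
  obtain ⟨q, hq, p, hp, hsaddle⟩ :=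
    Sion.exists_isSaddlePointOn (f := fun q p => EU u p q)
      (isPathConnected_stdSimplex β).nonempty (convex_stdSimplex ℝ β) (isCompact_stdSimplex ℝ β)
      (fun p _ => (R p).continuous_of_finiteDimensional.lowerSemicontinuous.lowerSemicontinuousOn _)
      (fun p _ => ((R p).convexOn (convex_stdSimplex ℝ β)).quasiconvexOn)
      (convex_stdSimplex ℝ α) (isPathConnected_stdSimplex α).nonempty (isCompact_stdSimplex ℝ α)
      (fun q _ => (L q).continuous_of_finiteDimensional.upperSemicontinuous.upperSemicontinuousOn _)
      (fun q _ => ((L q).concaveOn (convex_stdSimplex ℝ α)).quasiconcaveOn)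
  exact ⟨p, hp, q, hq, fun p' hp' q' hq' => hsaddle q' hq' p' hp'⟩

end MixedExtension

lemma pureStrat_eq_single [DecidableEq α] (a : α) : pureStrat a = Pi.single a (1 : ℝ) :=
  funext fun a' => (Pi.single_apply a 1 a').symm

lemma pureStrat_mem_stdSimplex [Fintype α] [DecidableEq α] (a : α) :
    pureStrat a ∈ stdSimplex ℝ α :=
  pureStrat_eq_single a ▸ single_mem_stdSimplex ℝ a

/-- every finite two-player game admits an envy-proof mixed strategy profile. -/
theorem exists_envyProof_profile
    [Fintype α] [Fintype β] [DecidableEq α] [DecidableEq β]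
    [Nonempty α] [Nonempty β]
    (u0 u1 : α → β → ℝ) :
    ∃ (p : α → ℝ) (q : β → ℝ), IsMixed p ∧ IsMixed q ∧ IsEnvyProof u0 u1 p q := by
  obtain ⟨p, hp, q, hq, hsaddle⟩ := exists_EU_saddlePoint (u0 - u1)
  refine ⟨p, q, hp, hq, fun a' => ?_, fun b' => ?_⟩
  · have := hsaddle _ (pureStrat_mem_stdSimplex a') q hq
    rw [EU_sub, EU_sub] at this
    linarith
  · have := hsaddle p hp _ (pureStrat_mem_stdSimplex b')
    rw [EU_sub, EU_sub] at this
    linarith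
end

section
/- Let φ be a CNF formula over n ≥ 1 variables and let G(φ) be the associated symmetric two-player game. If selecting one literal ℓ^i ∈ {+x^i, −x^i} for each variable x^i gives an assignment satisfying φ, and μ is the uniform distribution on the n actions {ℓ^1,…,ℓ^n} ⊆ Σ, then the mixed strategy profile (μ, μ) is both a Nash equilibrium of G(φ) and envy-proof in G(φ). -/
open Finset

variable {α β : Type*}

/-- Literals over `n` variables: a variable index together with a sign. -/
abbrev Lit (n : ℕ) := Fin n × Bool

/-- The negation of a literal. -/
def negLit {n : ℕ} (l : Lit n) : Lit n := (l.1, !l.2)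

/-- The common action set `Σ = V ∪ L ∪ C ∪ {f}` of the game `G(φ)`, where `C` is the
clause set of the CNF formula `φ`: variables, literals, clauses of `φ`, and a default
action `f`. -/
abbrev Act (n : ℕ) (C : Finset (Finset (Lit n))) :=
  Fin n ⊕ (Lit n ⊕ ({c : Finset (Lit n) // c ∈ C} ⊕ Unit))

/-- The default action `f`. -/
def fAct (n : ℕ) (C : Finset (Finset (Lit n))) : Act n C := Sum.inr (Sum.inr (Sum.inr ()))

/-- Player 0's utility in the game `G(φ)` (with `β = -n`); player 1's utility is
`fun x y => gu n C y x` by symmetry. -/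
def gu (n : ℕ) (C : Finset (Finset (Lit n))) : Act n C → Act n C → ℝ
  -- (var, ·)
  | Sum.inl _, Sum.inl _ => -(n : ℝ)
  | Sum.inl i, Sum.inr (Sum.inl l) => if l.1 = i then 0 else (n : ℝ)
  | Sum.inl _, Sum.inr (Sum.inr (Sum.inl _)) => -(n : ℝ)
  | Sum.inl _, Sum.inr (Sum.inr (Sum.inr _)) => (n : ℝ) + 1
  -- (lit, ·)
  | Sum.inr (Sum.inl l), Sum.inl i =>
      if l.1 = i then 2 * ((n : ℝ) - 1) else (n : ℝ) - 2
  | Sum.inr (Sum.inl l0), Sum.inr (Sum.inl l1) =>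
      if l0 = negLit l1 then -(n : ℝ) else (n : ℝ) - 1
  | Sum.inr (Sum.inl l), Sum.inr (Sum.inr (Sum.inl c)) =>
      if l ∈ c.1 then 2 * ((n : ℝ) - 1) else (n : ℝ) - 2
  | Sum.inr (Sum.inl _), Sum.inr (Sum.inr (Sum.inr _)) => (n : ℝ) - 1
  -- (cls, ·)
  | Sum.inr (Sum.inr (Sum.inl _)), Sum.inl _ => -(n : ℝ)
  | Sum.inr (Sum.inr (Sum.inl c)), Sum.inr (Sum.inl l) =>
      if l ∈ c.1 then 0 else (n : ℝ)
  | Sum.inr (Sum.inr (Sum.inl _)), Sum.inr (Sum.inr (Sum.inl _)) => -(n : ℝ)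
  | Sum.inr (Sum.inr (Sum.inl _)), Sum.inr (Sum.inr (Sum.inr _)) => (n : ℝ) + 1
  -- (f, ·)
  | Sum.inr (Sum.inr (Sum.inr _)), Sum.inl _ => (n : ℝ)
  | Sum.inr (Sum.inr (Sum.inr _)), Sum.inr (Sum.inl _) => (n : ℝ) - 1
  | Sum.inr (Sum.inr (Sum.inr _)), Sum.inr (Sum.inr (Sum.inl _)) => (n : ℝ)
  | Sum.inr (Sum.inr (Sum.inr _)), Sum.inr (Sum.inr (Sum.inr _)) => (n : ℝ) + 2

/-! Against the uniform distribution `μ` on the assigned literals `ℓ^1, …, ℓ^n`, an action earns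
the average of its payoffs against them. These literals are pairwise consistent, so `(μ, μ)` pays
`n - 1` to both players. Since the game is symmetric, both properties reduce to comparing, for each
action `a`, the sum of `u(a, ℓ^i)` with `n(n - 1)` and with the sum of `u(ℓ^i, a)`. A literal or
`f` earns at most `n - 1` against each `ℓ^i`, and is paid symmetrically. A variable or clause `z`
is hit by some `ℓ^i` (for a clause, because the assignment satisfies it): `z` earns `0` against it
and at most `n` elsewhere, while `ℓ^i` earns `2(n - 1)` against `z` and every other literal loses
at most `2` relative to `z`. -/

theorem EU_eq_sum_mul_sum [Fintype α] [Fintype β] (u : α → β → ℝ) (p : α → ℝ) (q : β → ℝ) :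
    EU u p q = ∑ a, p a * ∑ b, q b * u a b := by
  simp only [EU, mul_sum, mul_assoc]

theorem EU_swap [Fintype α] [Fintype β] (u : α → β → ℝ) (p : β → ℝ) (q : α → ℝ) :
    EU (fun x y => u y x) p q = EU u q p := by
  rw [EU, sum_comm]
  simp only [EU, mul_comm (p _)]

theorem EU_pureStrat_left [Fintype α] [Fintype β] [DecidableEq α]
    (u : α → β → ℝ) (a : α) (q : β → ℝ) :
    EU u (pureStrat a) q = ∑ b, q b * u a b := by
  simp [EU_eq_sum_mul_sum, pureStrat]

section SymmetricGame

variable [Fintype α] [DecidableEq α] {u : α → α → ℝ} {p : α → ℝ}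

theorem isNash_swap_of_forall (h : ∀ a, EU u (pureStrat a) p ≤ EU u p p) :
    IsNash u (fun x y => u y x) p p :=
  ⟨h, fun b => by simpa only [EU_swap u] using h b⟩

theorem isEnvyProof_swap_of_forall (h : ∀ a, EU u (pureStrat a) p ≤ EU u p (pureStrat a)) :
    IsEnvyProof u (fun x y => u y x) p p := by
  refine ⟨fun a => ?_, fun b => ?_⟩
  · rw [EU_swap u, EU_swap u]
    linarith [h a]
  · rw [EU_swap u, EU_swap u]
    linarith [h b]

end SymmetricGame

section UniformOnRange

variable {ι : Type*} [Fintype ι] [Fintype α] [DecidableEq α]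

noncomputable def uniformOnRange (F : ι → α) : α → ℝ :=
  fun a => if a ∈ univ.image F then 1 / Fintype.card ι else 0

variable {F : ι → α}

theorem sum_uniformOnRange_mul (hF : Function.Injective F) (g : α → ℝ) :
    ∑ a, uniformOnRange F a * g a = (∑ i, g (F i)) / Fintype.card ι := by
  simp only [uniformOnRange, ite_mul, zero_mul]
  rw [sum_ite_mem, univ_inter, sum_image fun i _ j _ h => hF h]
  simp only [one_div_mul_eq_div, ← sum_div]

theorem EU_pureStrat_uniformOnRange (hF : Function.Injective F) (u : α → α → ℝ) (a : α) :
    EU u (pureStrat a) (uniformOnRange F) = (∑ i, u a (F i)) / Fintype.card ι := by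
  rw [EU_pureStrat_left, sum_uniformOnRange_mul hF]

theorem EU_uniformOnRange_uniformOnRange [Nonempty ι] (hF : Function.Injective F)
    {u : α → α → ℝ} {v : ℝ} (hv : ∀ i j, u (F i) (F j) = v) :
    EU u (uniformOnRange F) (uniformOnRange F) = v := by
  have hcard : (Fintype.card ι : ℝ) ≠ 0 := Nat.cast_ne_zero.mpr Fintype.card_ne_zero
  simp only [EU_eq_sum_mul_sum, sum_uniformOnRange_mul hF, hv, sum_const, card_univ,
    nsmul_eq_mul]
  field_simp

theorem isNash_swap_uniformOnRange [Nonempty ι] (hF : Function.Injective F)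
    {u : α → α → ℝ} {v : ℝ} (hv : ∀ i j, u (F i) (F j) = v)
    (hbest : ∀ a, ∑ i, u a (F i) ≤ Fintype.card ι * v) :
    IsNash u (fun x y => u y x) (uniformOnRange F) (uniformOnRange F) := by
  refine isNash_swap_of_forall fun a => ?_
  rw [EU_pureStrat_uniformOnRange hF, EU_uniformOnRange_uniformOnRange hF hv,
    div_le_iff₀ (Nat.cast_pos.mpr Fintype.card_pos), mul_comm]
  exact hbest a

theorem isEnvyProof_swap_uniformOnRange (hF : Function.Injective F) {u : α → α → ℝ}
    (henvy : ∀ a, ∑ i, u a (F i) ≤ ∑ i, u (F i) a) :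
    IsEnvyProof u (fun x y => u y x) (uniformOnRange F) (uniformOnRange F) := by
  refine isEnvyProof_swap_of_forall fun a => ?_
  rw [← EU_swap u (pureStrat a), EU_pureStrat_uniformOnRange hF, EU_pureStrat_uniformOnRange hF]
  exact div_le_div_of_nonneg_right (henvy a) (Nat.cast_nonneg _)

end UniformOnRange

theorem sum_le_add_card_sub_one_mul {ι : Type*} [Fintype ι] {f : ι → ℝ} {a b : ℝ} (i₀ : ι)
    (h₀ : f i₀ ≤ a) (h : ∀ i, f i ≤ b) :
    ∑ i, f i ≤ a + (Fintype.card ι - 1) * b := by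
  classical
  have hcard : ((univ.erase i₀).card : ℝ) = Fintype.card ι - 1 := by
    rw [card_erase_of_mem (mem_univ i₀), card_univ,
      Nat.cast_pred (Fintype.card_pos_iff.mpr ⟨i₀⟩)]
  rw [← add_sum_erase _ _ (mem_univ i₀), ← hcard, ← nsmul_eq_mul]
  exact add_le_add h₀ (sum_le_card_nsmul _ _ _ fun i _ => h i)

section GameOfFormula

variable {n : ℕ} {C : Finset (Finset (Lit n))}

def assignedLit (C : Finset (Finset (Lit n))) (σ : Fin n → Bool) (i : Fin n) : Act n C :=
  Sum.inr (Sum.inl (i, σ i))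

theorem assignedLit_injective (σ : Fin n → Bool) : Function.Injective (assignedLit C σ) := by
  intro i j h
  simp only [assignedLit, Sum.inr.injEq, Sum.inl.injEq, Prod.mk.injEq] at h
  exact h.1

theorem eq_negLit_comm {l m : Lit n} : l = negLit m ↔ m = negLit l := by
  constructor <;> rintro rfl <;> simp [negLit]

theorem gu_assignedLit_assignedLit (σ : Fin n → Bool) (i j : Fin n) :
    gu n C (assignedLit C σ i) (assignedLit C σ j) = n - 1 := by
  have hconsistent : ((i, σ i) : Lit n) ≠ negLit (j, σ j) := by
    simp only [negLit, ne_eq, Prod.mk.injEq, not_and]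
    rintro rfl
    simp
  simp [assignedLit, gu, hconsistent]

theorem sum_gu_assignedLit_le_of_symm {a : Act n C} (σ : Fin n → Bool)
    (hsymm : ∀ l, gu n C a (Sum.inr (Sum.inl l)) = gu n C (Sum.inr (Sum.inl l)) a)
    (hle : ∀ l, gu n C a (Sum.inr (Sum.inl l)) ≤ n - 1) :
    ∑ i, gu n C a (assignedLit C σ i) ≤ n * (n - 1) ∧
      ∑ i, gu n C a (assignedLit C σ i) ≤ ∑ i, gu n C (assignedLit C σ i) a := by
  refine ⟨?_, (sum_congr rfl fun i _ => hsymm _).le⟩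
  have := sum_le_card_nsmul univ _ _ fun i _ => hle (i, σ i)
  rwa [card_univ, Fintype.card_fin, nsmul_eq_mul] at this

theorem sum_gu_assignedLit_le_of_hit {a : Act n C} (hn : 1 ≤ n) (P : Lit n → Prop)
    [DecidablePred P]
    (hleft : ∀ l, gu n C a (Sum.inr (Sum.inl l)) = if P l then 0 else (n : ℝ))
    (hright : ∀ l, gu n C (Sum.inr (Sum.inl l)) a =
      if P l then 2 * ((n : ℝ) - 1) else (n : ℝ) - 2)
    {σ : Fin n → Bool} (hhit : ∃ i, P (i, σ i)) :
    ∑ i, gu n C a (assignedLit C σ i) ≤ n * (n - 1) ∧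
      ∑ i, gu n C a (assignedLit C σ i) ≤ ∑ i, gu n C (assignedLit C σ i) a := by
  obtain ⟨i₀, hi₀⟩ := hhit
  have hn' : (1 : ℝ) ≤ n := by exact_mod_cast hn
  constructor
  · have := sum_le_add_card_sub_one_mul (f := fun i => gu n C a (assignedLit C σ i)) (a := 0)
      (b := n) i₀ (by simp [assignedLit, hleft, hi₀])
      fun i => by simp only [assignedLit, hleft]; split_ifs <;> linarith
    rw [Fintype.card_fin] at this
    linarith
  · rw [← sub_nonpos, ← sum_sub_distrib]
    have := sum_le_add_card_sub_one_mul
      (f := fun i => gu n C a (assignedLit C σ i) - gu n C (assignedLit C σ i) a)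
      (a := -2 * (n - 1)) (b := 2) i₀ (by simp [assignedLit, hleft, hright, hi₀])
      fun i => by simp only [assignedLit, hleft, hright]; split_ifs <;> linarith
    rw [Fintype.card_fin] at this
    linarith

theorem sum_gu_assignedLit_le (hn : 1 ≤ n) {σ : Fin n → Bool}
    (hsat : ∀ c ∈ C, ∃ i : Fin n, ((i, σ i) : Lit n) ∈ c) (a : Act n C) :
    ∑ i, gu n C a (assignedLit C σ i) ≤ n * (n - 1) ∧
      ∑ i, gu n C a (assignedLit C σ i) ≤ ∑ i, gu n C (assignedLit C σ i) a := by
  rcases a with x | l | c | _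
  · exact sum_gu_assignedLit_le_of_hit hn (fun l => l.1 = x) (fun _ => rfl) (fun _ => rfl)
      ⟨x, rfl⟩
  · refine sum_gu_assignedLit_le_of_symm σ (fun m => if_congr eq_negLit_comm rfl rfl) fun m => ?_
    have hn' : (1 : ℝ) ≤ n := by exact_mod_cast hn
    simp only [gu]
    split_ifs <;> linarith
  · exact sum_gu_assignedLit_le_of_hit hn (· ∈ c.1) (fun _ => rfl) (fun _ => rfl) (hsat c.1 c.2)
  · exact sum_gu_assignedLit_le_of_symm σ (fun _ => rfl) fun _ => le_rfl

end GameOfFormula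

theorem satisfying_assignment_gives_envyProof_nash_general
    (n : ℕ) (hn : 1 ≤ n) (C : Finset (Finset (Lit n)))
    (σ : Fin n → Bool) (hsat : ∀ c ∈ C, ∃ i : Fin n, ((i, σ i) : Lit n) ∈ c)
    (μ : Act n C → ℝ)
    (hμ : μ = fun a =>
      if a ∈ Finset.univ.image (fun i : Fin n => (Sum.inr (Sum.inl (i, σ i)) : Act n C))
      then (1 : ℝ) / n else 0) :
    IsNash (gu n C) (fun x y => gu n C y x) μ μ ∧
    IsEnvyProof (gu n C) (fun x y => gu n C y x) μ μ := by
  have hμ' : μ = uniformOnRange (assignedLit C σ) := by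
    rw [hμ]
    unfold uniformOnRange
    rw [Fintype.card_fin]
    rfl
  have : Nonempty (Fin n) := ⟨⟨0, hn⟩⟩
  subst hμ'
  refine ⟨isNash_swap_uniformOnRange (assignedLit_injective σ)
      (gu_assignedLit_assignedLit σ) fun a => ?_,
    isEnvyProof_swap_uniformOnRange (assignedLit_injective σ)
      fun a => (sum_gu_assignedLit_le hn hsat a).2⟩
  simpa using (sum_gu_assignedLit_le hn hsat a).1

/-- if choosing one literal `ℓ^i = (i, σ i)` per variable satisfies `φ`
(clauses nonempty), then the uniform distribution `μ` on `{ℓ^1,…,ℓ^n}` gives a profile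
`(μ,μ)` that is both a Nash equilibrium of `G(φ)` and envy-proof in `G(φ)`. -/
theorem satisfying_assignment_gives_envyProof_nash
    (n : ℕ) (hn : 1 ≤ n) (C : Finset (Finset (Lit n)))
    (hC : ∀ c ∈ C, c.Nonempty)
    (σ : Fin n → Bool) (hsat : ∀ c ∈ C, ∃ i : Fin n, ((i, σ i) : Lit n) ∈ c)
    (μ : Act n C → ℝ)
    (hμ : μ = fun a =>
      if a ∈ Finset.univ.image (fun i : Fin n => (Sum.inr (Sum.inl (i, σ i)) : Act n C))
      then (1 : ℝ) / n else 0) :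
    IsNash (gu n C) (fun x y => gu n C y x) μ μ ∧
    IsEnvyProof (gu n C) (fun x y => gu n C y x) μ μ :=
  satisfying_assignment_gives_envyProof_nash_general n hn C σ hsat μ hμ
end

section
/- Let G = ({u_i}_{i∈[m]}, A) be an m-player game that is γ-sensitive for some γ ≥ 0, and let t ∈ ℕ. Then every mixed strategy profile that is a Nash equilibrium of G is (4γt, t)-coalitional envy-proof. -/
open Finset

variable {m : ℕ} {A : Type*}

/-- `x` is a mixed strategy profile: each player's strategy is a probability distribution. -/
def IsMixedProfile [Fintype A] (x : Fin m → A → ℝ) : Prop :=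
  ∀ i, (∀ a, 0 ≤ x i a) ∧ ∑ a, x i a = 1

/-- Expected utility of `u` under the product distribution of the mixed profile `x`. -/
def pEU [Fintype A] (u : (Fin m → A) → ℝ) (x : Fin m → A → ℝ) : ℝ :=
  ∑ s : Fin m → A, (∏ i, x i (s i)) * u s

/-- The pure action `a` viewed as a mixed strategy. -/
def pureS [DecidableEq A] (a : A) : A → ℝ := fun b => if b = a then 1 else 0

/-- The profile `(x_{−S} : x'_S)`: players in `S` deviate to the pure actions given by
`d`, the others keep playing as in `x`. -/
def deviate [DecidableEq A] (x : Fin m → A → ℝ) (S : Finset (Fin m)) (d : Fin m → A) :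
    Fin m → A → ℝ :=
  fun i => if i ∈ S then pureS (d i) else x i

/-- `x` is a Nash equilibrium of the `m`-player game `({u_i}, A)`. -/
def IsNashM [Fintype A] [DecidableEq A] (u : Fin m → (Fin m → A) → ℝ)
    (x : Fin m → A → ℝ) : Prop :=
  ∀ (i : Fin m) (a : A), pEU (u i) (deviate x {i} (fun _ => a)) ≤ pEU (u i) x

/-- `x` is `(ε,t)`-coalitional envy-proof. -/
def CoalEnvyProof [Fintype A] [DecidableEq A] (u : Fin m → (Fin m → A) → ℝ)
    (ε : ℝ) (t : ℕ) (x : Fin m → A → ℝ) : Prop :=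
  ∀ S : Finset (Fin m), S.card ≤ t → ∀ d : Fin m → A, ∀ i ∈ S, ∀ j ∉ S,
    pEU (u i) (deviate x S d) - pEU (u i) x ≤
      pEU (u j) (deviate x S d) - pEU (u j) x + ε

/-- The game is γ-sensitive: a unilateral deviation of player `i` changes any other
player's utility by at most `γ`. -/
def Sensitive [Fintype A] [DecidableEq A] (u : Fin m → (Fin m → A) → ℝ) (γ : ℝ) : Prop :=
  ∀ (i j : Fin m), j ≠ i → ∀ (s : Fin m → A) (a : A),
    |u j (Function.update s i a) - u j s| ≤ γ

/-!
The gain of a deviating coalition `S` is an average, over pure profiles `s` drawn from `x`,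
of `u (S.piecewise d s) - u s`. Moving the members of `S` in one at a time, sensitivity lets each
move change an outsider's utility by at most `γ`, so an outsider `j` gains at least `-γ|S|`.
For a member `i`, let `i` move first: that unilateral move gains nothing in expectation because
`x` is a Nash equilibrium, and the other `|S| - 1` moves raise `u i` by at most `γ` each.
Hence `i` out-gains `j` by at most `γ(2|S| - 1) ≤ 4γt`.
-/

lemma deviate_eq_piecewise [DecidableEq A] (x : Fin m → A → ℝ) (S : Finset (Fin m))
    (d : Fin m → A) : deviate x S d = S.piecewise (fun i => pureS (d i)) x :=
  rfl

section ExpectedUtility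

variable [Fintype A]

lemma pEU_add (f g : (Fin m → A) → ℝ) (x : Fin m → A → ℝ) :
    pEU (fun s => f s + g s) x = pEU f x + pEU g x := by
  simp only [pEU, mul_add, sum_add_distrib]

lemma pEU_sub (f g : (Fin m → A) → ℝ) (x : Fin m → A → ℝ) :
    pEU (fun s => f s - g s) x = pEU f x - pEU g x := by
  simp only [pEU, mul_sub, sum_sub_distrib]

lemma pEU_const {x : Fin m → A → ℝ} (hx : IsMixedProfile x) (c : ℝ) :
    pEU (fun _ => c) x = c := by
  have hmass : ∑ s : Fin m → A, ∏ i, x i (s i) = 1 := by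
    rw [← Fintype.prod_sum]
    exact prod_eq_one fun i _ => (hx i).2
  rw [pEU, ← sum_mul, hmass, one_mul]

lemma pEU_mono {f g : (Fin m → A) → ℝ} {x : Fin m → A → ℝ} (hx : IsMixedProfile x)
    (hfg : ∀ s, f s ≤ g s) : pEU f x ≤ pEU g x :=
  sum_le_sum fun s _ =>
    mul_le_mul_of_nonneg_left (hfg s) (prod_nonneg fun i _ => (hx i).1 (s i))

lemma abs_pEU_le {f : (Fin m → A) → ℝ} {x : Fin m → A → ℝ} (hx : IsMixedProfile x) {c : ℝ}
    (hf : ∀ s, |f s| ≤ c) : |pEU f x| ≤ c :=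
  abs_le.2 ⟨(pEU_const hx (-c)).symm.le.trans (pEU_mono hx fun s => (abs_le.1 (hf s)).1),
    (pEU_mono hx fun s => (abs_le.1 (hf s)).2).trans (pEU_const hx c).le⟩

lemma pEU_eq_sum_insertNth {n : ℕ} (f : (Fin (n + 1) → A) → ℝ) (y : Fin (n + 1) → A → ℝ)
    (k : Fin (n + 1)) :
    pEU f y = ∑ b, ∑ r : Fin n → A,
      y k b * ((∏ j, y (k.succAbove j) (r j)) * f (k.insertNth b r)) := by
  rw [pEU, ← Fintype.sum_prod_type']
  exact Fintype.sum_equiv (Fin.insertNthEquiv _ k).symm _ _ fun s => by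
    simp [Fin.prod_univ_succAbove _ k, Fin.removeNth, mul_assoc]

lemma pEU_update_pureS [DecidableEq A] (f : (Fin m → A) → ℝ) (y : Fin m → A → ℝ)
    (k : Fin m) (a : A) (hy : ∑ b, y k b = 1) :
    pEU f (Function.update y k (pureS a)) = pEU (fun s => f (Function.update s k a)) y := by
  cases m with
  | zero => exact k.elim0
  | succ n =>
    simp only [pEU_eq_sum_insertNth _ _ k, Function.update_self, Fin.update_insertNth,
      Function.update_of_ne (Fin.succAbove_ne k _), ← mul_sum, ← sum_mul, hy, one_mul]
    simp [pureS]

lemma pEU_deviate [DecidableEq A] {x : Fin m → A → ℝ} (hx : IsMixedProfile x)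
    (f : (Fin m → A) → ℝ) (S : Finset (Fin m)) (d : Fin m → A) :
    pEU f (deviate x S d) = pEU (fun s => f (S.piecewise d s)) x := by
  induction S using Finset.induction generalizing f with
  | empty => simp [deviate_eq_piecewise]
  | insert k S hk ih =>
    have hk_mass : ∑ b, deviate x S d k b = 1 := by
      rw [deviate_eq_piecewise, piecewise_eq_of_notMem _ _ _ hk]
      exact (hx k).2
    rw [deviate_eq_piecewise, piecewise_insert, ← deviate_eq_piecewise,
      pEU_update_pureS _ _ k _ hk_mass, ih]
    simp only [piecewise_insert]

end ExpectedUtility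

section Game

variable [Fintype A] [DecidableEq A] {u : Fin m → (Fin m → A) → ℝ} {γ : ℝ} {x : Fin m → A → ℝ}

lemma Sensitive.abs_sub_piecewise_le (hsen : Sensitive u γ) {S : Finset (Fin m)} {j : Fin m}
    (hj : j ∉ S) (d s : Fin m → A) : |u j (S.piecewise d s) - u j s| ≤ γ * #S := by
  induction S using Finset.induction with
  | empty => simp
  | insert k S hk ih =>
    rw [mem_insert, not_or] at hj
    calc |u j ((insert k S).piecewise d s) - u j s|
        ≤ |u j (Function.update (S.piecewise d s) k (d k)) - u j (S.piecewise d s)|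
          + |u j (S.piecewise d s) - u j s| := by
          rw [piecewise_insert]
          exact abs_sub_le _ _ _
      _ ≤ γ + γ * #S := add_le_add (hsen k j hj.1 _ _) (ih hj.2)
      _ = γ * #(insert k S) := by
          rw [card_insert_of_notMem hk]
          push_cast
          ring

lemma Sensitive.abs_pEU_deviate_sub_le (hsen : Sensitive u γ)
    (hx : IsMixedProfile x) {S : Finset (Fin m)} {j : Fin m} (hj : j ∉ S) (d : Fin m → A) :
    |pEU (u j) (deviate x S d) - pEU (u j) x| ≤ γ * #S := by
  rw [pEU_deviate hx, ← pEU_sub]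
  exact abs_pEU_le hx (hsen.abs_sub_piecewise_le hj d)

lemma IsNashM.pEU_deviate_sub_le (hNash : IsNashM u x) (hsen : Sensitive u γ)
    (hx : IsMixedProfile x) {S : Finset (Fin m)} {i : Fin m} (hi : i ∈ S) (d : Fin m → A) :
    pEU (u i) (deviate x S d) - pEU (u i) x ≤ γ * #(S.erase i) := by
  have hsplit : ∀ s, S.piecewise d s = (S.erase i).piecewise d (Function.update s i (d i)) :=
    fun s => by
      conv_lhs => rw [← insert_erase hi]
      rw [piecewise_insert, update_piecewise_of_notMem _ _ _ (notMem_erase i S)]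
  have hpoint : ∀ s, u i (S.piecewise d s) - u i s ≤
      (u i (Function.update s i (d i)) - u i s) + γ * #(S.erase i) := fun s => by
    have := (abs_le.1 (hsen.abs_sub_piecewise_le (notMem_erase i S) d
      (Function.update s i (d i)))).2
    rw [← hsplit] at this
    linarith
  have hunilateral : pEU (fun s => u i (Function.update s i (d i))) x ≤ pEU (u i) x := by
    simpa [pEU_deviate hx, piecewise_singleton] using hNash i (d i)
  calc pEU (u i) (deviate x S d) - pEU (u i) x
      = pEU (fun s => u i (S.piecewise d s) - u i s) x := by rw [pEU_deviate hx, pEU_sub]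
    _ ≤ pEU (fun s => (u i (Function.update s i (d i)) - u i s) + γ * #(S.erase i)) x :=
        pEU_mono hx hpoint
    _ ≤ γ * #(S.erase i) := by
        rw [pEU_add, pEU_sub, pEU_const hx]
        linarith

end Game

theorem sensitive_nash_coalEnvyProof_general
    [Fintype A] [DecidableEq A]
    (u : Fin m → (Fin m → A) → ℝ) (γ : ℝ) (hsen : Sensitive u γ) (t : ℕ)
    (x : Fin m → A → ℝ) (hx : IsMixedProfile x) (hNash : IsNashM u x) :
    CoalEnvyProof u (4 * γ * t) t x := by
  intro S hS d i hi j hj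
  have hγ : 0 ≤ γ := (abs_nonneg _).trans (hsen i j (ne_of_mem_of_not_mem hi hj).symm d (d i))
  have hgain_i := hNash.pEU_deviate_sub_le hsen hx hi d
  have hgain_j := (abs_le.1 (hsen.abs_pEU_deviate_sub_le hx hj d)).1
  have hcard_i : γ * #(S.erase i) ≤ γ * t :=
    mul_le_mul_of_nonneg_left (by exact_mod_cast (card_erase_le).trans hS) hγ
  have hcard_j : γ * #S ≤ γ * t := mul_le_mul_of_nonneg_left (by exact_mod_cast hS) hγ
  have hγt : 0 ≤ γ * t := by positivity
  linarith

/-- in a γ-sensitive `m`-player game, every Nash equilibrium is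
`(4γt, t)`-coalitional envy-proof. -/
theorem sensitive_nash_coalEnvyProof
    [Fintype A] [DecidableEq A] [Nonempty A]
    (u : Fin m → (Fin m → A) → ℝ) (γ : ℝ) (hγ : 0 ≤ γ) (hsen : Sensitive u γ) (t : ℕ)
    (x : Fin m → A → ℝ) (hx : IsMixedProfile x) (hNash : IsNashM u x) :
    CoalEnvyProof u (4 * γ * t) t x :=
  sensitive_nash_coalEnvyProof_general u γ hsen t x hx hNash
end
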